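/- arXiv:1210.4235 — 3 statements merged into one kernel-verified Lean document; each statement's English description precedes it below -/
import Mathlib

section
/- Let L be a normal real n×n matrix with L·1 = 0 and suppose 0 is a simple eigenvalue of L with all other eigenvalues having positive real part. Then for every k, the integral ∫₀^t ‖exp(-L^T s)·e_k‖² ds equals t/n + ∑_{p=2}^n (1 - exp(-2 Re(λ_p) t))/(2 Re(λ_p)) |u^{(p)}_k|², where λ_p are the nonzero eigenvalues of L and u^{(p)} the corresponding orthonormal eigenvectors, and e_k is the k-th standard basis vector. -/
/-!
Diagonalize `L` over `ℂ` by the unitary matrix `U` whose columns are the `u⁽ᵖ⁾`, so that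
`exp(-sL) = U diag(e^{-sλ_p}) Uᴴ`. Since `Uᴴ` is an isometry, the squared norm of the `k`-th
row of `exp(-sL)`, which is the integrand, equals `∑_p e^{-2 Re(λ_p) s} |u⁽ᵖ⁾_k|²`. Integrating
term by term, `p = 0` contributes `t/n` and every other `p` contributes
`(1 - e^{-2 Re(λ_p) t}) / (2 Re λ_p)` times `|u⁽ᵖ⁾_k|²`.
-/

open Matrix Finset NormedSpace

theorem intervalIntegral.integral_exp_neg_mul {c : ℝ} (hc : c ≠ 0) (t : ℝ) :
    ∫ s in (0 : ℝ)..t, Real.exp (-(c * s)) = (1 - Real.exp (-(c * t))) / c := by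
  have h := integral_comp_mul_left Real.exp (neg_ne_zero.mpr hc) (a := 0) (b := t)
  simp only [neg_mul, mul_zero, integral_exp, Real.exp_zero, smul_eq_mul] at h
  rw [h]
  field_simp
  ring

namespace Matrix

variable {m : Type*} [Fintype m] [DecidableEq m]

theorem mul_eq_mul_diagonal_of_mulVec_eq_smul {R : Type*} [CommSemiring R] {A : Matrix m m R}
    {u : m → m → R} {lam : m → R} (h : ∀ p, A *ᵥ u p = lam p • u p) :
    A * of (fun i p => u p i) = of (fun i p => u p i) * diagonal lam := by
  ext i p
  rw [mul_diagonal]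
  simpa [mul_apply, mulVec, dotProduct, mul_comm] using congrFun (h p) i

theorem of_mem_unitaryGroup_of_orthonormal {𝕜 : Type*} [RCLike 𝕜] {u : m → m → 𝕜}
    (h : ∀ p q, ∑ i, starRingEnd 𝕜 (u p i) * u q i = if p = q then 1 else 0) :
    of (fun i p => u p i) ∈ unitaryGroup m 𝕜 := by
  rw [mem_unitaryGroup_iff']
  ext p q
  simpa [mul_apply, one_apply] using h p q

theorem exp_map_ofReal (A : Matrix m m ℝ) :
    (exp A).map Complex.ofReal = exp (A.map Complex.ofReal) :=
  open scoped Norms.Operator in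
  map_exp Complex.ofRealHom.mapMatrix (continuous_id.matrix_map Complex.continuous_ofReal) A

theorem exp_eq_of_mul_eq_mul_diagonal {𝔸 : Type*} [NormedCommRing 𝔸] [NormedAlgebra ℚ 𝔸]
    [CompleteSpace 𝔸] [StarRing 𝔸] {A U : Matrix m m 𝔸} {d : m → 𝔸}
    (hU : U ∈ unitaryGroup m 𝔸) (hAU : A * U = U * diagonal d) :
    exp A = U * diagonal (fun i => exp (d i)) * star U := by
  have hUU : U * star U = 1 := mem_unitaryGroup_iff.mp hU
  have hinv : U⁻¹ = star U := inv_eq_right_inv hUU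
  have hA : A = U * diagonal d * U⁻¹ := by
    rw [hinv, ← hAU, mul_assoc, hUU, mul_one]
  rw [hA, exp_conj _ _ (.of_mul_eq_one _ hUU), exp_diagonal, hinv, Pi.exp_def]

theorem sum_norm_sq_conj_diagonal_apply {𝕜 : Type*} [RCLike 𝕜] {U : Matrix m m 𝕜}
    (hU : U ∈ unitaryGroup m 𝕜) (d : m → 𝕜) (k : m) :
    ∑ ℓ, ‖(U * diagonal d * star U) k ℓ‖ ^ 2 = ∑ p, ‖d p‖ ^ 2 * ‖U k p‖ ^ 2 := by
  set G := U * diagonal d * star U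
  have hGG : G * star G = U * diagonal (fun p => (‖d p‖ ^ 2 : 𝕜)) * star U := by
    have hUU : star U * U = 1 := mem_unitaryGroup_iff'.mp hU
    simp only [G, star_mul, star_star, ← mul_assoc]
    rw [mul_assoc (U * diagonal d) (star U) U, hUU, mul_one, mul_assoc U, star_eq_conjTranspose,
      diagonal_conjTranspose, diagonal_mul_diagonal]
    congr 3
    funext p
    exact RCLike.mul_conj (d p)
  apply RCLike.ofReal_injective (K := 𝕜)
  have hkk := congrFun (congrFun hGG k) k
  rw [mul_apply, mul_apply] at hkk
  simp only [mul_diagonal, star_apply, RCLike.star_def, RCLike.mul_conj] at hkk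
  push_cast
  rw [hkk]
  refine sum_congr rfl fun p _ => ?_
  rw [mul_right_comm, RCLike.mul_conj, mul_comm]

theorem sum_sq_exp_transpose_mulVec_single {M : Matrix m m ℝ} {U : Matrix m m ℂ} {d : m → ℂ}
    (hU : U ∈ unitaryGroup m ℂ) (hMU : M.map Complex.ofReal * U = U * diagonal d) (k : m) :
    ∑ ℓ, (exp Mᵀ *ᵥ Pi.single k 1) ℓ ^ 2 = ∑ p, Real.exp (2 * (d p).re) * ‖U k p‖ ^ 2 := by
  have hexp := exp_map_ofReal M
  rw [exp_eq_of_mul_eq_mul_diagonal hU hMU] at hexp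
  calc ∑ ℓ, (exp Mᵀ *ᵥ Pi.single k 1) ℓ ^ 2
      = ∑ ℓ, ‖((exp M).map Complex.ofReal) k ℓ‖ ^ 2 := by
        simp [exp_transpose]
    _ = ∑ p, ‖exp (d p)‖ ^ 2 * ‖U k p‖ ^ 2 := by
        rw [hexp, sum_norm_sq_conj_diagonal_apply hU]
    _ = ∑ p, Real.exp (2 * (d p).re) * ‖U k p‖ ^ 2 := by
        simp [← Complex.exp_eq_exp_ℂ, Complex.norm_exp, ← Real.exp_nat_mul]

theorem sum_sq_exp_neg_smul_transpose_mulVec_single {L : Matrix m m ℝ} {U : Matrix m m ℂ}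
    {lam : m → ℂ} (hU : U ∈ unitaryGroup m ℂ)
    (hLU : L.map Complex.ofReal * U = U * diagonal lam) (k : m) (s : ℝ) :
    ∑ ℓ, (exp (-(s • Lᵀ)) *ᵥ Pi.single k 1) ℓ ^ 2
      = ∑ p, Real.exp (-(2 * (lam p).re * s)) * ‖U k p‖ ^ 2 := by
  have hsLU : (-(s • L)).map Complex.ofReal * U = U * diagonal (-((s : ℂ) • lam)) := by
    have hmap : (-(s • L)).map Complex.ofReal = -((s : ℂ) • L.map Complex.ofReal) := by
      ext; simp
    rw [hmap, neg_mul, smul_mul, hLU, ← Matrix.mul_smul, ← mul_neg, ← diagonal_smul,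
      diagonal_neg]
    rfl
  have h := sum_sq_exp_transpose_mulVec_single hU hsLU k
  rw [transpose_neg, transpose_smul] at h
  rw [h]
  refine sum_congr rfl fun p _ => ?_
  simp only [Pi.neg_apply, Pi.smul_apply, smul_eq_mul, Complex.neg_re, Complex.re_ofReal_mul]
  congr 2
  ring

end Matrix

theorem variance_integral_eq_of_normal_laplacian_general {n : ℕ} [NeZero n]
    (L : Matrix (Fin n) (Fin n) ℝ)
    (lam : Fin n → ℂ) (u : Fin n → Fin n → ℂ)
    (horth : ∀ p q, ∑ i, starRingEnd ℂ (u p i) * u q i = if p = q then 1 else 0)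
    (heig : ∀ p, (L.map Complex.ofReal) *ᵥ u p = lam p • u p)
    (hlam0 : lam 0 = 0)
    (hu0 : u 0 = fun _ => (((Real.sqrt n)⁻¹ : ℝ) : ℂ))
    (hre : ∀ p, p ≠ 0 → 0 < (lam p).re)
    (k : Fin n) (t : ℝ) :
    ∫ s in (0 : ℝ)..t,
        ∑ ℓ, ((NormedSpace.exp (-(s • Lᵀ))) *ᵥ (Pi.single k 1)) ℓ ^ 2
      = t / n + ∑ p ∈ Finset.univ.erase 0,
          (1 - Real.exp (-(2 * (lam p).re * t))) / (2 * (lam p).re) *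
            ‖u p k‖ ^ 2 := by
  have hpointwise := sum_sq_exp_neg_smul_transpose_mulVec_single
    (of_mem_unitaryGroup_of_orthonormal horth) (mul_eq_mul_diagonal_of_mulVec_eq_smul heig) k
  simp only [of_apply] at hpointwise
  rw [intervalIntegral.integral_congr fun s _ => hpointwise s,
    intervalIntegral.integral_finsetSum
      fun p _ => (by fun_prop : Continuous _).intervalIntegrable _ _,
    ← add_sum_erase _ _ (mem_univ 0)]
  congr 1
  · simp [hlam0, hu0, div_eq_mul_inv]
  · refine sum_congr rfl fun p hp => ?_
    have hc : 2 * (lam p).re ≠ 0 := by linarith [hre p (ne_of_mem_erase hp)]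
    rw [intervalIntegral.integral_mul_const, intervalIntegral.integral_exp_neg_mul hc]

/-- For a normal Laplacian `L` with `L·1 = 0`, zero a simple eigenvalue (the
eigenvalue of index `0`) and all other eigenvalues with positive real part,
the integral `∫₀ᵗ ‖exp(-Lᵀ s)·e_k‖² ds` equals
`t/n + ∑_{p≠0} (1 - e^{-2 Re(λ_p) t})/(2 Re(λ_p)) |u⁽ᵖ⁾_k|²`,
where `λ_p, u⁽ᵖ⁾` is an orthonormal eigendecomposition of `L` over `ℂ`. -/
theorem variance_integral_eq_of_normal_laplacian {n : ℕ} [NeZero n]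
    (L : Matrix (Fin n) (Fin n) ℝ) (hnormal : L * Lᵀ = Lᵀ * L)
    (hL1 : L *ᵥ (fun _ => (1 : ℝ)) = 0)
    (lam : Fin n → ℂ) (u : Fin n → Fin n → ℂ)
    (horth : ∀ p q, ∑ i, starRingEnd ℂ (u p i) * u q i = if p = q then 1 else 0)
    (heig : ∀ p, (L.map Complex.ofReal) *ᵥ u p = lam p • u p)
    (hlam0 : lam 0 = 0)
    (hu0 : u 0 = fun _ => (((Real.sqrt n)⁻¹ : ℝ) : ℂ))
    (hre : ∀ p, p ≠ 0 → 0 < (lam p).re)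
    (k : Fin n) (t : ℝ) (ht : 0 ≤ t) :
    ∫ s in (0 : ℝ)..t,
        ∑ ℓ, ((NormedSpace.exp (-(s • Lᵀ))) *ᵥ (Pi.single k 1)) ℓ ^ 2
      = t / n + ∑ p ∈ Finset.univ.erase 0,
          (1 - Real.exp (-(2 * (lam p).re * t))) / (2 * (lam p).re) *
            ‖u p k‖ ^ 2 :=
  variance_integral_eq_of_normal_laplacian_general L lam u horth heig hlam0 hu0 hre k t
end

section
/- Let L̂ be a symmetric real n×n matrix with L̂·1 = 0 and rank n − 1. Then the matrix L̂ + 1·1^T is invertible and (L̂ + 1·1^T)^{-1} = L̂^# + (1/n²)·1·1^T, where L̂^# is the group inverse of L̂. -/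
/-!
Write `J` for the all-ones matrix. From `L̂ 1 = 0` and symmetry, `L̂ J = J L̂ = 0`; since the
group inverse satisfies `X = X² L̂ = L̂ X²`, also `X J = J X = 0`, and `J² = n J`. Expanding
then gives `M Y M = M` for `M = L̂ + J` and `Y = X + n⁻² J`. The matrix `M` is invertible: if
`M v = 0`, then multiplying by `J` gives `n J v = 0`, hence `L̂ v = 0`, so `v` is a multiple of
`1` because the rank condition makes `ker L̂ = span {1}`, and `J v = 0` forces that multiple to
vanish. Cancelling `M` in `M Y M = M` gives `M Y = 1`.
-/

open Matrix

section MonoidWithZero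

variable {M₀ : Type*} [MonoidWithZero M₀] {a x b : M₀}

theorem Commute.mul_eq_zero_of_mul_mul_eq_self (hax : Commute a x) (hx : x * a * x = x)
    (hab : a * b = 0) : x * b = 0 := by
  rw [← hx, mul_assoc x a x, hax.eq, ← mul_assoc, mul_assoc, hab, mul_zero]

theorem Commute.mul_eq_zero_of_mul_mul_eq_self' (hax : Commute a x) (hx : x * a * x = x)
    (hba : b * a = 0) : b * x = 0 := by
  rw [← hx, ← hax.eq, ← mul_assoc, ← mul_assoc, hba, zero_mul, zero_mul]

end MonoidWithZero

theorem add_mul_add_smul_mul_add_eq_self {K A : Type*} [Field K] [Ring A] [Algebra K A]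
    {a x j : A} {c : K} (hc : c ≠ 0) (haxa : a * x * a = a) (haj : a * j = 0) (hja : j * a = 0)
    (hxj : x * j = 0) (hjx : j * x = 0) (hjj : j * j = c • j) :
    (a + j) * (x + (c ^ 2)⁻¹ • j) * (a + j) = a + j := by
  have hprod : (a + j) * (x + (c ^ 2)⁻¹ • j) = a * x + c⁻¹ • j := by
    rw [add_mul, mul_add, mul_add, hjx, mul_smul_comm, mul_smul_comm, haj, hjj, smul_smul,
      smul_zero, sq, mul_inv, inv_mul_cancel_right₀ hc]
    abel
  rw [hprod, add_mul, mul_add, mul_add, smul_mul_assoc, smul_mul_assoc, hja, hjj, haxa,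
    mul_assoc, hxj, mul_zero, smul_zero, smul_smul, inv_mul_cancel₀ hc, one_smul]
  abel

namespace Matrix

variable {m ι o K : Type*} [Fintype ι]

section CommSemiring

variable [CommSemiring K]

theorem mul_ones_eq_zero {A : Matrix m ι K} (hA : A *ᵥ (fun _ => 1) = 0) :
    A * (of fun _ _ => 1 : Matrix ι o K) = 0 := by
  ext i j
  simpa [mul_apply, mulVec, dotProduct] using congrFun hA i

theorem ones_mul_eq_zero {A : Matrix ι ι K} (hsym : Aᵀ = A) (hA : A *ᵥ (fun _ => 1) = 0) :
    (of fun _ _ => 1 : Matrix ι ι K) * A = 0 := by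
  have hJ : (of fun _ _ => 1 : Matrix ι ι K)ᵀ = of fun _ _ => 1 := rfl
  rw [← hsym, ← hJ, ← transpose_mul, mul_ones_eq_zero (hsym ▸ hA), transpose_zero]

theorem ones_mul_ones :
    (of fun _ _ => 1 : Matrix m ι K) * (of fun _ _ => 1 : Matrix ι o K) =
      (Fintype.card ι : K) • of fun _ _ => 1 := by
  ext i j
  simp [mul_apply]

theorem ones_mulVec (v : ι → K) :
    (of fun _ _ => 1 : Matrix m ι K) *ᵥ v = fun _ => ∑ i, v i := by
  ext i
  simp [mulVec, dotProduct]

end CommSemiring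

variable [Field K]

theorem ker_mulVecLin_eq_span_of_rank_eq {A : Matrix m ι K} {v : ι → K} (hv : v ≠ 0)
    (hAv : A *ᵥ v = 0) (hrank : A.rank = Fintype.card ι - 1) :
    LinearMap.ker A.mulVecLin = K ∙ v := by
  refine (Submodule.eq_of_le_of_finrank_le ?_ ?_).symm
  · simpa [Submodule.span_le] using hAv
  · have hdim := A.mulVecLin.finrank_range_add_finrank_ker
    rw [Module.finrank_fintype_fun_eq_card] at hdim
    change A.rank + _ = _ at hdim
    rw [finrank_span_singleton hv]
    omega

theorem isUnit_add_ones [DecidableEq ι] [CharZero K] [Nonempty ι] {A : Matrix ι ι K}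
    (hsym : Aᵀ = A) (hA : A *ᵥ (fun _ => 1) = 0) (hrank : A.rank = Fintype.card ι - 1) :
    IsUnit (A + of fun _ _ => 1) := by
  have hJA := ones_mul_eq_zero hsym hA
  have hJJ : (of fun _ _ => 1 : Matrix ι ι K) * of (fun _ _ => 1) = _ := ones_mul_ones
  set J : Matrix ι ι K := of fun _ _ => 1
  have hcard : (Fintype.card ι : K) ≠ 0 := by simp
  have hone : (fun _ => 1 : ι → K) ≠ 0 :=
    fun h => one_ne_zero (congrFun h (Classical.arbitrary ι))
  rw [← mulVec_injective_iff_isUnit, ← coe_mulVecLin, injective_iff_map_eq_zero]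
  intro v hv
  rw [mulVecLin_apply, add_mulVec] at hv
  have hJv : J *ᵥ v = 0 := by
    have hJMv := congrArg (J *ᵥ ·) hv
    rw [mulVec_add, mulVec_mulVec, mulVec_mulVec, hJA, hJJ, zero_mulVec, zero_add, smul_mulVec,
      mulVec_zero] at hJMv
    exact (smul_eq_zero.mp hJMv).resolve_left hcard
  rw [hJv, add_zero] at hv
  obtain ⟨c, rfl⟩ := Submodule.mem_span_singleton.mp
    ((ker_mulVecLin_eq_span_of_rank_eq hone hA hrank).le hv)
  have hc : c * Fintype.card ι = 0 := by
    simpa [ones_mulVec, J] using congrFun hJv (Classical.arbitrary ι)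
  simp [(mul_eq_zero.mp hc).resolve_right hcard]

end Matrix

/-- For a symmetric `L̂` with `L̂·1 = 0`, rank `n - 1`, and group inverse `X`,
the matrix `L̂ + 11ᵀ` is invertible with inverse `X + (1/n²)·11ᵀ`. -/
theorem inverse_of_laplacian_plus_ones {n : ℕ}
    (Lh X : Matrix (Fin n) (Fin n) ℝ)
    (hsym : Lhᵀ = Lh)
    (hL1 : Lh *ᵥ (fun _ => (1 : ℝ)) = 0)
    (hrank : Lh.rank = n - 1)
    (hgi1 : Lh * X * Lh = Lh) (hgi2 : X * Lh * X = X) (hgi3 : Lh * X = X * Lh) :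
    IsUnit (Lh + Matrix.of (fun _ _ => (1 : ℝ))) ∧
      (Lh + Matrix.of (fun _ _ => (1 : ℝ)))⁻¹
        = X + (((n : ℝ) ^ 2)⁻¹) • Matrix.of (fun _ _ => (1 : ℝ)) := by
  cases isEmpty_or_nonempty (Fin n)
  · exact ⟨isUnit_of_subsingleton _, Subsingleton.elim _ _⟩
  have hunit := isUnit_add_ones hsym hL1 (by rwa [Fintype.card_fin])
  have hLJ := mul_ones_eq_zero (o := Fin n) hL1
  have hJL := ones_mul_eq_zero hsym hL1
  have hMYM := add_mul_add_smul_mul_add_eq_self (Nat.cast_ne_zero.mpr Fintype.card_ne_zero) hgi1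
    hLJ hJL (Commute.mul_eq_zero_of_mul_mul_eq_self hgi3 hgi2 hLJ)
    (Commute.mul_eq_zero_of_mul_mul_eq_self' hgi3 hgi2 hJL) ones_mul_ones
  rw [Fintype.card_fin] at hMYM
  refine ⟨hunit, inv_eq_right_inv (hunit.mul_right_cancel ?_)⟩
  rwa [one_mul]
end

section
/- For the imploding star with uniform weight α and σ = 1, the variance of each leaf node, i.e., the (k,k) entry (k ≥ 2) of ∫₀^t exp(-Ls)exp(-L^T s) ds, equals t + (2e^{-αt} − e^{-2αt} − 1)/α, which is independent of the number of nodes n, while the center's variance equals t. -/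
/-!
`L / α = 1 - 𝟙 e₀ᵀ` is idempotent, so the exponential series collapses to
`exp (-s L) = e^{-αs} • 1 + (1 - e^{-αs}) • 𝟙 e₀ᵀ`. The integrand `(E Eᵀ) k k` is the squared
length of row `k` of `E = exp (-s L)`, namely `e^{-αs} eₖ + (1 - e^{-αs}) e₀`: this is `1` at the
center and `(1 - e^{-αs})² + e^{-αs}²` at a leaf, whatever `n` is.
-/

open Matrix NormedSpace

theorem IsIdempotentElem.exp_smul {A : Type*} [Ring A] [Algebra ℝ A] [TopologicalSpace A]
    [IsTopologicalRing A] [T2Space A] [ContinuousSMul ℝ A] {P : A} (hP : IsIdempotentElem P)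
    (c : ℝ) : exp (c • P) = 1 + (Real.exp c - 1) • P := by
  have hterm : ∀ k : ℕ, (k.factorial⁻¹ : ℝ) • (c • P) ^ k
      = (c ^ k / k.factorial) • P + if k = 0 then 1 - P else 0 := by
    rintro (_ | k)
    · simp
    · rw [smul_pow, hP.pow_succ_eq, smul_smul, if_neg k.succ_ne_zero, add_zero,
        inv_mul_eq_div]
  have hsum : HasSum (fun k : ℕ => (c ^ k / k.factorial) • P + if k = 0 then 1 - P else 0)
      (Real.exp c • P + (1 - P)) := by
    refine HasSum.add ?_ (hasSum_ite_eq 0 (1 - P))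
    rw [Real.exp_eq_exp_ℝ]
    exact (expSeries_div_hasSum_exp c).smul_const P
  rw [exp_eq_tsum ℝ]
  dsimp only
  rw [funext hterm, hsum.tsum_eq, sub_smul, one_smul]
  abel

theorem Matrix.isIdempotentElem_vecMulVec {m R : Type*} [Fintype m] [CommSemiring R]
    {u v : m → R} (h : v ⬝ᵥ u = 1) : IsIdempotentElem (vecMulVec u v) := by
  rw [IsIdempotentElem, vecMulVec_mul_vecMulVec, h, one_smul]

theorem Matrix.mul_transpose_self_apply_self {m R : Type*} [Fintype m] [CommSemiring R]
    (A : Matrix m m R) (i : m) : (A * Aᵀ) i i = ∑ j, A i j ^ 2 := by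
  simp only [mul_apply, transpose_apply, sq]

theorem Matrix.exp_mul_exp_transpose_apply_self {m : Type*} [Fintype m] [DecidableEq m]
    (A : Matrix m m ℝ) (i : m) : (exp A * exp Aᵀ) i i = ∑ j, exp A i j ^ 2 := by
  rw [exp_transpose, mul_transpose_self_apply_self]

theorem integral_one_sub_exp_sq_add_exp_sq {α : ℝ} (hα : α ≠ 0) (t : ℝ) :
    ∫ s in (0 : ℝ)..t, ((1 - Real.exp (-(α * s))) ^ 2 + Real.exp (-(α * s)) ^ 2)
      = t + (2 * Real.exp (-(α * t)) - Real.exp (-(2 * α * t)) - 1) / α := by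
  have hderiv : ∀ s : ℝ, HasDerivAt
      (fun s => s + (2 * Real.exp (-(α * s)) - Real.exp (-(2 * α * s))) / α)
      ((1 - Real.exp (-(α * s))) ^ 2 + Real.exp (-(α * s)) ^ 2) s := by
    intro s
    have h1 : HasDerivAt (fun s => Real.exp (-(α * s))) (Real.exp (-(α * s)) * -α) s := by
      simpa using ((hasDerivAt_id s).const_mul α).neg.exp
    have h2 : HasDerivAt (fun s => Real.exp (-(2 * α * s)))
        (Real.exp (-(2 * α * s)) * -(2 * α)) s := by
      simpa using ((hasDerivAt_id s).const_mul (2 * α)).neg.exp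
    refine ((hasDerivAt_id' s).add (((h1.const_mul 2).sub h2).div_const α)).congr_deriv ?_
    have hsq : Real.exp (-(2 * α * s)) = Real.exp (-(α * s)) ^ 2 := by
      rw [sq, ← Real.exp_add]; ring_nf
    rw [hsq]
    field_simp
    ring
  rw [intervalIntegral.integral_eq_sub_of_hasDerivAt (fun s _ => hderiv s)
    (by apply Continuous.intervalIntegrable; fun_prop)]
  simp only [mul_zero, neg_zero, Real.exp_zero]
  ring

namespace ImplodingStar

def laplacian (n : ℕ) (α : ℝ) : Matrix (Fin n) (Fin n) ℝ :=
  of fun i j => if (i : ℕ) = 0 then 0 else if (j : ℕ) = 0 then -α else if i = j then α else 0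

variable {n : ℕ} [NeZero n]

/-- The projection `x ↦ x 0 • 1`, i.e. `𝟙 e₀ᵀ`. -/
def hubProjection (n : ℕ) [NeZero n] : Matrix (Fin n) (Fin n) ℝ :=
  vecMulVec 1 (Pi.single 0 1)

theorem isIdempotentElem_hubProjection : IsIdempotentElem (hubProjection n) :=
  isIdempotentElem_vecMulVec (by simp)

theorem hubProjection_apply (i j : Fin n) : hubProjection n i j = if j = 0 then 1 else 0 := by
  simp [hubProjection, vecMulVec_apply, Pi.single_apply]

variable (α : ℝ)

theorem laplacian_eq_smul_one_sub_hubProjection :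
    laplacian n α = α • (1 - hubProjection n) := by
  ext i j
  rcases eq_or_ne i 0 with rfl | hi <;> rcases eq_or_ne j 0 with rfl | hj <;>
    simp [laplacian, hubProjection_apply, one_apply, Fin.val_eq_zero_iff, eq_comm, *]

theorem exp_neg_smul_laplacian (s : ℝ) :
    exp (-(s • laplacian n α)) =
      Real.exp (-(α * s)) • 1 + (1 - Real.exp (-(α * s))) • hubProjection n := by
  rw [laplacian_eq_smul_one_sub_hubProjection, smul_smul, ← neg_smul,
    isIdempotentElem_hubProjection.one_sub.exp_smul]
  ring_nf
  module

theorem exp_neg_smul_laplacian_apply (s : ℝ) (i j : Fin n) :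
    exp (-(s • laplacian n α)) i j =
      Real.exp (-(α * s)) * (if i = j then 1 else 0)
        + (1 - Real.exp (-(α * s))) * (if j = 0 then 1 else 0) := by
  simp [exp_neg_smul_laplacian, one_apply, hubProjection_apply]

theorem sum_sq_exp_neg_smul_laplacian_of_ne_zero (s : ℝ) {i : Fin n} (hi : i ≠ 0) :
    ∑ j, exp (-(s • laplacian n α)) i j ^ 2
      = (1 - Real.exp (-(α * s))) ^ 2 + Real.exp (-(α * s)) ^ 2 := by
  rw [Fintype.sum_eq_add 0 i hi.symm]
  · simp [exp_neg_smul_laplacian_apply, hi]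
  · rintro j ⟨hj0, hji⟩
    simp [exp_neg_smul_laplacian_apply, hj0, Ne.symm hji]

theorem sum_sq_exp_neg_smul_laplacian_zero (s : ℝ) :
    ∑ j, exp (-(s • laplacian n α)) 0 j ^ 2 = 1 := by
  rw [Fintype.sum_eq_single 0]
  · simp [exp_neg_smul_laplacian_apply]
  · intro j hj
    simp [exp_neg_smul_laplacian_apply, hj, Ne.symm hj]

end ImplodingStar

theorem imploding_star_variances_general {n : ℕ} (α : ℝ) (hα : 0 < α)
    (L : Matrix (Fin n) (Fin n) ℝ)
    (hL : L = Matrix.of (fun i j : Fin n =>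
      if (i : ℕ) = 0 then 0
      else if (j : ℕ) = 0 then -α
      else if i = j then α else 0))
    (t : ℝ) :
    (∀ k : Fin n, (k : ℕ) ≠ 0 →
      (∫ s in (0 : ℝ)..t,
          ((NormedSpace.exp (-(s • L))) * (NormedSpace.exp (-(s • Lᵀ)))) k k)
        = t + (2 * Real.exp (-(α * t)) - Real.exp (-(2 * α * t)) - 1) / α) ∧
    (∀ k : Fin n, (k : ℕ) = 0 →
      (∫ s in (0 : ℝ)..t,
          ((NormedSpace.exp (-(s • L))) * (NormedSpace.exp (-(s • Lᵀ)))) k k)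
        = t) := by
  obtain rfl : L = ImplodingStar.laplacian n α := hL
  simp only [← transpose_smul, ← transpose_neg, exp_mul_exp_transpose_apply_self]
  refine ⟨fun k hk => ?_, fun k hk => ?_⟩ <;> have : NeZero n := NeZero.of_pos k.pos
  · simp only [ImplodingStar.sum_sq_exp_neg_smul_laplacian_of_ne_zero α _
      (Fin.val_ne_zero_iff.mp hk)]
    exact integral_one_sub_exp_sq_add_exp_sq hα.ne' t
  · obtain rfl : k = 0 := Fin.val_eq_zero_iff.mp hk
    simp [ImplodingStar.sum_sq_exp_neg_smul_laplacian_zero]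

/-- For the imploding star with uniform weight `α > 0` and `σ = 1`, the variance
of each leaf node—the `(k,k)` entry (`k ≠ 0`) of `∫₀ᵗ exp(-Ls) exp(-Lᵀs) ds`—is
`t + (2e^{-αt} − e^{-2αt} − 1)/α`, independent of the number of nodes `n`,
while the center's variance is `t`. -/
theorem imploding_star_variances {n : ℕ} (hn : 2 ≤ n) (α : ℝ) (hα : 0 < α)
    (L : Matrix (Fin n) (Fin n) ℝ)
    (hL : L = Matrix.of (fun i j : Fin n =>
      if (i : ℕ) = 0 then 0
      else if (j : ℕ) = 0 then -α
      else if i = j then α else 0))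
    (t : ℝ) :
    (∀ k : Fin n, (k : ℕ) ≠ 0 →
      (∫ s in (0 : ℝ)..t,
          ((NormedSpace.exp (-(s • L))) * (NormedSpace.exp (-(s • Lᵀ)))) k k)
        = t + (2 * Real.exp (-(α * t)) - Real.exp (-(2 * α * t)) - 1) / α) ∧
    (∀ k : Fin n, (k : ℕ) = 0 →
      (∫ s in (0 : ℝ)..t,
          ((NormedSpace.exp (-(s • L))) * (NormedSpace.exp (-(s • Lᵀ)))) k k)
        = t) :=
  imploding_star_variances_general α hα L hL t
end
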